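/- arXiv:0810.0280 — 2 statements merged into one kernel-verified Lean document; each statement's English description precedes it below -/
import Mathlib

section
/- Let μ be a positive Borel measure on ℝ with all absolute moments finite, let n ≥ 1, and let κ be a partition with l(κ) ≤ n. Then ∫_{ℝ^n} Δ(λ)² s_κ(λ_1, …, λ_n) dμ(λ_1)⋯dμ(λ_n) = n! · det( G_{(n−i+κ_{i−1}) + (n−j)} )_{1≤i,j≤n}, where G_m = ∫_ℝ x^m dμ(x); i.e., the average of the Schur polynomial against the squared Vandermonde is n! times a determinant of moments. -/
/-!
Both `Δ(λ) = det(λ_j^{n-1-i})` and `Δ(λ) s_κ(λ) = det(λ_j^{n-1-i+κ_i})` are determinants whose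
`(i, j)` entry depends on `λ_j` only, so expanding their product over pairs of permutations
`(σ, τ)` gives a signed sum of products of one-variable functions, each of which integrates
coordinatewise against `μ ⊗ ⋯ ⊗ μ`. For fixed `σ` the resulting sum over `τ` is the moment
determinant with rows permuted by `σ`, i.e. `sign σ` times it, so every `σ` contributes the same
determinant, whence the factor `n!` (Andréief's identity).
-/

open MeasureTheory

/-- The length `l(κ)` of a partition given by its parts `κ : ℕ → ℕ`. -/
noncomputable def plen (κ : ℕ → ℕ) : ℕ := sInf {N | κ N = 0}

/-- The Vandermonde product `Δ(λ) = ∏_{i<j} (λ_i - λ_j)`. -/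
noncomputable def vandermondeProd {n : ℕ} (lam : Fin n → ℝ) : ℝ :=
  ∏ i : Fin n, ∏ j ∈ Finset.Ioi i, (lam i - lam j)

open Matrix Equiv

section Andreief

variable {ι R : Type*} [Fintype ι] [DecidableEq ι] [CommRing R]

lemma sum_sum_sign_mul_sign_mul_prod_eq_factorial_mul_det (G : Matrix ι ι R) :
    ∑ σ : Perm ι, ∑ τ : Perm ι, (σ.sign * τ.sign : R) * ∏ k, G (σ k) (τ k)
      = (Fintype.card ι).factorial * det G := by
  have inner (σ : Perm ι) :
      ∑ τ : Perm ι, (σ.sign * τ.sign : R) * ∏ k, G (σ k) (τ k) = det G := by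
    have h := det_permute σ G
    rw [← det_transpose, det_apply] at h
    simp only [Units.smul_def, zsmul_eq_mul, transpose_apply, submatrix_apply, id] at h
    simp only [mul_assoc, ← Finset.mul_sum]
    rw [h, ← mul_assoc, ← Int.cast_mul, ← Units.val_mul,
      Int.units_mul_self, Units.val_one, Int.cast_one, one_mul]
  simp [inner, Fintype.card_perm]

lemma det_mul_det_eq_sum_sum_sign_mul_sign_mul_prod (A B : Matrix ι ι R) :
    det A * det B
      = ∑ σ : Perm ι, ∑ τ : Perm ι, (σ.sign * τ.sign : R) * ∏ k, A (σ k) k * B (τ k) k := by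
  rw [det_apply, det_apply, Finset.sum_mul_sum]
  refine Finset.sum_congr rfl fun σ _ => Finset.sum_congr rfl fun τ _ => ?_
  simp only [Units.smul_def, zsmul_eq_mul, Finset.prod_mul_distrib]
  ring

theorem integral_det_mul_det_eq_factorial_mul_det {α 𝕜 : Type*} [RCLike 𝕜] [MeasurableSpace α]
    (μ : Measure α) [SigmaFinite μ] (f g : ι → α → 𝕜)
    (hfg : ∀ i j, Integrable (fun y => f i y * g j y) μ) :
    ∫ x : ι → α, det (of fun i k => f i (x k)) * det (of fun i k => g i (x k))
        ∂(Measure.pi fun _ => μ)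
      = (Fintype.card ι).factorial * det (of fun i j => ∫ y, f i y * g j y ∂μ) := by
  have hprod (σ τ : Perm ι) :
      Integrable (fun x : ι → α => ∏ k, f (σ k) (x k) * g (τ k) (x k)) (Measure.pi fun _ => μ) :=
    Integrable.fintype_prod fun k => hfg (σ k) (τ k)
  simp only [det_mul_det_eq_sum_sum_sign_mul_sign_mul_prod, of_apply]
  rw [← sum_sum_sign_mul_sign_mul_prod_eq_factorial_mul_det, integral_finsetSum _ fun σ _ =>
    integrable_finsetSum _ fun τ _ => (hprod σ τ).const_mul _]
  refine Finset.sum_congr rfl fun σ _ => ?_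
  rw [integral_finsetSum _ fun τ _ => (hprod σ τ).const_mul _]
  refine Finset.sum_congr rfl fun τ _ => ?_
  rw [integral_const_mul, integral_fintype_prod_eq_prod (fun k y => f (σ k) y * g (τ k) y)]
  simp only [of_apply]

end Andreief

lemma vandermondeProd_eq_det {n : ℕ} (lam : Fin n → ℝ) :
    vandermondeProd lam = det (of fun i j : Fin n => lam j ^ (n - 1 - (i : ℕ))) := by
  have h : (of fun i j : Fin n => lam j ^ (n - 1 - (i : ℕ)))ᵀ = projVandermonde 1 lam := by
    ext i j
    simp only [transpose_apply, of_apply, projVandermonde_apply, Pi.one_apply, one_pow, Fin.val_rev,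
      one_mul]
    congr 1
    omega
  rw [← det_transpose, h, det_projVandermonde]
  simp [vandermondeProd]

/-- Indices run over `Fin n`, i.e. are 0-based, so the exponent `n - i + κ_{i-1}` of the
bialternant reads `n - 1 - i + κ i`. -/
theorem integral_vandermonde_sq_mul_schur_eq_det_moments_general
    (μ : Measure ℝ)
    (hmom : ∀ m : ℕ, Integrable (fun x : ℝ => |x| ^ m) μ)
    (n : ℕ)
    (κ : ℕ → ℕ)
    (s : (Fin n → ℝ) → ℝ)
    (hs : ∀ lam : Fin n → ℝ,
      vandermondeProd lam * s lam
        = Matrix.det (Matrix.of fun i j : Fin n => lam j ^ (n - 1 - (i : ℕ) + κ i))) :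
    ∫ lam : Fin n → ℝ, (vandermondeProd lam) ^ 2 * s lam
        ∂(Measure.pi fun _ : Fin n => μ)
      = (n.factorial : ℝ) *
          Matrix.det (Matrix.of fun i j : Fin n =>
            ∫ x : ℝ, x ^ ((n - 1 - (i : ℕ) + κ i) + (n - 1 - (j : ℕ))) ∂μ) := by
  have : IsFiniteMeasure μ :=
    (integrable_const_iff.mp (by simpa using hmom 0)).resolve_left one_ne_zero
  have hmonomial (a b : ℕ) : Integrable (fun x : ℝ => x ^ a * x ^ b) μ := by
    simp_rw [← pow_add]
    exact (hmom (a + b)).mono' (by fun_prop) (ae_of_all _ fun x => by simp)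
  calc
    _ = ∫ lam : Fin n → ℝ, det (of fun i j : Fin n => lam j ^ (n - 1 - (i : ℕ) + κ i))
          * det (of fun i j : Fin n => lam j ^ (n - 1 - (i : ℕ))) ∂(Measure.pi fun _ => μ) := by
      congr 1 with lam
      rw [sq, mul_assoc, hs, vandermondeProd_eq_det, mul_comm]
    _ = (Fintype.card (Fin n)).factorial * det (of fun i j : Fin n =>
          ∫ x : ℝ, x ^ (n - 1 - (i : ℕ) + κ i) * x ^ (n - 1 - (j : ℕ)) ∂μ) :=
      integral_det_mul_det_eq_factorial_mul_det μ _ _ fun i j => hmonomial _ _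
    _ = _ := by simp_rw [Fintype.card_fin, ← pow_add]

/-- Let `μ` be a positive Borel measure on `ℝ` with all absolute moments finite,
`n ≥ 1`, and `κ` a partition with `l(κ) ≤ n`.  Let `s_κ` be the Schur polynomial in `n`
variables, characterized by the bialternant formula
`Δ(λ) · s_κ(λ) = det(λ_j^{n-i+κ_{i-1}})_{1≤i,j≤n}`.  Then
`∫_{ℝⁿ} Δ(λ)² s_κ(λ) dμⁿ(λ) = n! · det(G_{(n-i+κ_{i-1})+(n-j)})_{1≤i,j≤n}`,
where `G_m = ∫ x^m dμ`.  (Indices `i, j` below run over `Fin n`, i.e. are 0-based, so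
the exponent `n - i + κ_{i-1} - 1` of the bialternant reads `n - 1 - i + κ i`.) -/
theorem integral_vandermonde_sq_mul_schur_eq_det_moments
    (μ : Measure ℝ)
    (hmom : ∀ m : ℕ, Integrable (fun x : ℝ => |x| ^ m) μ)
    (n : ℕ) (hn : 1 ≤ n)
    (κ : ℕ → ℕ) (hκ : Antitone κ) (hκ0 : ∃ N, ∀ j, N ≤ j → κ j = 0)
    (hκlen : plen κ ≤ n)
    (s : (Fin n → ℝ) → ℝ)
    (hs : ∀ lam : Fin n → ℝ,
      vandermondeProd lam * s lam
        = Matrix.det (Matrix.of fun i j : Fin n => lam j ^ (n - 1 - (i : ℕ) + κ i))) :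
    ∫ lam : Fin n → ℝ, (vandermondeProd lam) ^ 2 * s lam
        ∂(Measure.pi fun _ : Fin n => μ)
      = (n.factorial : ℝ) *
          Matrix.det (Matrix.of fun i j : Fin n =>
            ∫ x : ℝ, x ^ ((n - 1 - (i : ℕ) + κ i) + (n - 1 - (j : ℕ))) ∂μ) :=
  integral_vandermonde_sq_mul_schur_eq_det_moments_general μ hmom n κ s hs
end

section
/- Let μ be a positive Borel measure on ℝ with all absolute moments finite and let n ≥ 1. For each partition κ with l(κ) ≤ n put G_κ = ∫_{ℝ^n} Δ(λ)² s_κ(λ_1,…,λ_n) dμ(λ_1)⋯dμ(λ_n). Then for every partition α with l(α) ≤ n+1 and every partition β with l(β) ≤ n−1: Σ_{j=0}^{n} sgn⁺(α, a_{−j}) · sgn⁻(β, a_{−j}) · G_{α − a_{−j}} · G_{β + a_{−j}} = 0, where a_{−j} = α_j − j + 1 and a summand is taken to be 0 whenever β + a_{−j} is not well defined. (This system of Plücker relations for the coefficients G_κ is the content of the paper's main theorem that the partition function of the random matrix model with external source, expanded in Schur functions, is a KP τ-function.) -/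
/-!
By the bialternant formula and Andréief's identity, `G_κ` is, up to a factor independent of `κ`,
the moment determinant `det (∫ x ^ (e_a + b) dμ)_{a,b<n}` with `e_a = κ_a + n - 1 - a`. Up to the
common shift `n - 1`, the exponents of `α - a_{-j}` are the `n + 1` numbers `a_{-k}` with `a_{-j}`
deleted, and those of `β + a_{-j}` are the `n - 1` numbers `b_{-t}` with `a_{-j}` inserted; moving
the inserted row to the front costs the sign `sgn⁻(β, a_{-j})`, and if `β + a_{-j}` is undefined,
`a_{-j}` already is some `b_{-t}` and the determinant has a repeated row. What remains is the
Plücker relation `∑_k (-1)^k det (U without row k) · det (row k of U over W) = 0` for matrices `U`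
of size `(n + 1) × n` and `W` of size `(n - 1) × n`, which follows from two Laplace expansions.
-/

open MeasureTheory

/-- The parts of the partition `α - i` where `i = a_{-k} = α_k - k + 1`:
namely `(α₀+1, …, α_{k-1}+1, α_{k+1}, α_{k+2}, …)`; here `sgn⁺(α, a_{-k}) = (-1)^k`. -/
def subParts (α : ℕ → ℕ) (k : ℕ) : ℕ → ℕ :=
  fun j => if j < k then α j + 1 else α (j + 1)

/-- The parts of the partition `β + i`, where `i` is inserted at position `m`
(`m = 0` is the case `i > b₀`, and `m = l + 1` the case `b_{-l} > i > b_{-l-1}`);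
here `sgn⁻(β, i) = (-1)^m`. -/
def addParts (β : ℕ → ℕ) (i : ℤ) (m : ℕ) : ℕ → ℕ :=
  fun j => if j < m then β j - 1 else if j = m then (i + m).toNat else β (j - 1)

/-- `G_κ = ∫_{ℝⁿ} Δ(λ)² s_κ(λ) dμⁿ(λ)`, for a given family `s` of Schur polynomials. -/
noncomputable def schurAverage (μ : Measure ℝ) (n : ℕ)
    (s : (ℕ → ℕ) → (Fin n → ℝ) → ℝ) (κ : ℕ → ℕ) : ℝ :=
  ∫ lam : Fin n → ℝ, (vandermondeProd lam) ^ 2 * s κ lam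
    ∂(Measure.pi fun _ : Fin n => μ)

open Classical in
/-- The summand `sgn⁻(β, i) · G_{β+i}`, taken to be `0` when `β + i` is not well
defined.  When `β + i` is well defined there is a (unique) insertion position `m`, the
sign is `sgn⁻(β, i) = (-1)^m`, and the value is `(-1)^m · G (addParts β i m)`. -/
noncomputable def addTerm (β : ℕ → ℕ) (i : ℤ) (G : (ℕ → ℕ) → ℝ) : ℝ :=
  if h : ∃ m : ℕ, (∀ j : ℕ, j < m → (β j : ℤ) - j - 1 > i) ∧
      (∀ j : ℕ, m ≤ j → i > (β j : ℤ) - j - 1)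
  then (-1 : ℝ) ^ h.choose * G (addParts β i h.choose)
  else 0

open Matrix Finset Equiv

namespace Matrix

variable {R : Type*} [CommRing R] {N : ℕ}

theorem sum_neg_one_pow_mul_det_succAbove_eq_zero (u : Fin (N + 2) → Fin (N + 1) → R)
    (i : Fin (N + 1)) :
    ∑ k : Fin (N + 2), (-1) ^ (k : ℕ) * u k i * (of fun j => u (k.succAbove j)).det = 0 := by
  -- Expand along its first column a matrix whose first column repeats column `i.succ`.
  have h := det_succ_column_zero (of fun k => (Fin.cons (u k i) (u k) : Fin (N + 2) → R))
  rw [det_zero_of_column_eq (Fin.succ_ne_zero i).symm fun k => by simp] at h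
  exact h.symm

theorem sum_neg_one_pow_mul_det_succAbove_mul_det_cons_eq_zero
    (u : Fin (N + 2) → Fin (N + 1) → R) (w : Fin N → Fin (N + 1) → R) :
    ∑ k : Fin (N + 2),
        (-1) ^ (k : ℕ) * (of fun j => u (k.succAbove j)).det * (of (Fin.cons (u k) w)).det
      = 0 := by
  have hexpand : ∀ k, (of (Fin.cons (u k) w)).det
      = ∑ i : Fin (N + 1), (-1) ^ (i : ℕ) * u k i * (of fun a b => w a (i.succAbove b)).det := by
    intro k
    rw [det_succ_row_zero]
    rfl
  simp_rw [hexpand, mul_sum]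
  rw [sum_comm]
  refine sum_eq_zero fun i _ => ?_
  calc _ = (-1) ^ (i : ℕ) * (of fun a b => w a (i.succAbove b)).det *
        ∑ k : Fin (N + 2), (-1) ^ (k : ℕ) * u k i * (of fun j => u (k.succAbove j)).det := by
        rw [mul_sum]
        exact sum_congr rfl fun k _ => by ring
    _ = 0 := by rw [sum_neg_one_pow_mul_det_succAbove_eq_zero, mul_zero]

theorem det_of_insertNth (m : Fin (N + 1)) (x : Fin (N + 1) → R) (w : Fin N → Fin (N + 1) → R) :
    (of (Fin.insertNth m x w)).det = (-1) ^ (m : ℕ) * (of (Fin.cons x w)).det := by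
  rw [← Fin.cons_comp_cycleRange]
  exact (det_permute m.cycleRange (of (Fin.cons x w))).trans (by simp [Fin.sign_cycleRange])

end Matrix

section Andreief

variable {X : Type*} [MeasurableSpace X] {μ : Measure X} [SigmaFinite μ] {n : ℕ}

/-- Andréief's identity. -/
theorem integral_det_mul_det_eq_factorial_mul_det_s7 (f g : Fin n → X → ℝ)
    (hfg : ∀ a b, Integrable (fun x => f a x * g b x) μ) :
    ∫ x : Fin n → X, (of fun i j => f i (x j)).det * (of fun i j => g i (x j)).det
        ∂(Measure.pi fun _ => μ)
      = n.factorial * (of fun a b => ∫ t, f a t * g b t ∂μ).det := by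
  set M : Matrix (Fin n) (Fin n) ℝ := of fun a b => ∫ t, f a t * g b t ∂μ
  set term : Perm (Fin n) → Perm (Fin n) → (Fin n → X) → ℝ := fun σ τ x =>
    ((Perm.sign σ : ℤ) : ℝ) * ((Perm.sign τ : ℤ) : ℝ) * ∏ j, f (σ j) (x j) * g (τ j) (x j)
  have hexpand : ∀ x : Fin n → X, (of fun i j => f i (x j)).det * (of fun i j => g i (x j)).det
      = ∑ σ, ∑ τ, term σ τ x := by
    intro x
    rw [det_apply', det_apply', sum_mul_sum]
    refine sum_congr rfl fun σ _ => sum_congr rfl fun τ _ => ?_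
    simp only [term, of_apply, prod_mul_distrib]
    ring
  have hint : ∀ σ τ, Integrable (term σ τ) (Measure.pi fun _ => μ) := fun σ τ =>
    (Integrable.fintype_prod (f := fun j t => f (σ j) t * g (τ j) t) fun j => hfg _ _).const_mul _
  have hterm : ∀ σ τ, ∫ x, term σ τ x ∂(Measure.pi fun _ => μ)
      = ((Perm.sign σ : ℤ) : ℝ) * (((Perm.sign τ : ℤ) : ℝ) * ∏ j, M (σ j) (τ j)) := by
    intro σ τ
    rw [integral_const_mul, integral_fintype_prod_eq_prod (fun j t => f (σ j) t * g (τ j) t),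
      mul_assoc]
    rfl
  -- Summing over `τ` gives the determinant of `M` with its rows permuted by `σ`.
  have hrow : ∀ σ : Perm (Fin n),
      ∑ τ, ((Perm.sign σ : ℤ) : ℝ) * (((Perm.sign τ : ℤ) : ℝ) * ∏ j, M (σ j) (τ j)) = M.det := by
    intro σ
    have h := det_permute σ M
    rw [← det_transpose, det_apply'] at h
    rw [← mul_sum]
    simp only [transpose_apply, submatrix_apply, id] at h
    rw [h, ← mul_assoc, ← Int.cast_mul, ← Units.val_mul, Int.units_mul_self]
    simp
  simp_rw [hexpand]
  rw [integral_finsetSum _ fun σ _ => integrable_finsetSum _ fun τ _ => hint σ τ]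
  simp_rw [integral_finsetSum _ fun τ _ => hint _ τ, hterm, hrow]
  simp [card_univ, Fintype.card_perm]

end Andreief

theorem exists_vandermondeProd_eq_mul_det (n : ℕ) :
    ∃ ε : ℝ, ∀ lam : Fin n → ℝ, vandermondeProd lam = ε * (vandermonde lam).det := by
  refine ⟨∏ i : Fin n, ∏ _j ∈ Ioi i, (-1 : ℝ), fun lam => ?_⟩
  rw [det_vandermonde, vandermondeProd, ← prod_mul_distrib]
  refine prod_congr rfl fun i _ => ?_
  rw [← prod_mul_distrib]
  exact prod_congr rfl fun j _ => by ring

def shiftedParts (n : ℕ) (κ : ℕ → ℕ) : Fin n → ℕ := fun a => n - 1 - a + κ a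

noncomputable def momentRow (μ : Measure ℝ) (n m : ℕ) : Fin n → ℝ := fun b => ∫ x, x ^ (m + b) ∂μ

section Moments

variable {μ : Measure ℝ}

theorem integrable_pow_of_integrable_abs_pow {m : ℕ} (h : Integrable (fun x : ℝ => |x| ^ m) μ) :
    Integrable (fun x : ℝ => x ^ m) μ :=
  (integrable_norm_iff (by fun_prop)).1 (by simpa [norm_pow] using h)

theorem exists_schurAverage_eq_mul_det (hmom : ∀ m : ℕ, Integrable (fun x : ℝ => |x| ^ m) μ)
    {n : ℕ} {s : (ℕ → ℕ) → (Fin n → ℝ) → ℝ}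
    (hs : ∀ (κ : ℕ → ℕ) (lam : Fin n → ℝ),
      vandermondeProd lam * s κ lam
        = Matrix.det (Matrix.of fun i j : Fin n => lam j ^ (n - 1 - (i : ℕ) + κ i))) :
    ∃ c : ℝ, ∀ κ, schurAverage μ n s κ = c * (of (momentRow μ n ∘ shiftedParts n κ)).det := by
  have : IsFiniteMeasure μ :=
    (integrable_const_iff_isFiniteMeasure one_ne_zero).1 (by simpa using hmom 0)
  obtain ⟨ε, hε⟩ := exists_vandermondeProd_eq_mul_det n
  refine ⟨ε * n.factorial, fun κ => ?_⟩
  have hpt : ∀ lam : Fin n → ℝ, vandermondeProd lam ^ 2 * s κ lam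
      = ε * ((of fun i j => lam j ^ shiftedParts n κ i).det *
          (of fun (i j : Fin n) => lam j ^ (i : ℕ)).det) := by
    intro lam
    rw [sq, mul_assoc, hs, hε, ← det_transpose (vandermonde lam)]
    change ε * (of fun (i j : Fin n) => lam j ^ (i : ℕ)).det *
      (of fun i j => lam j ^ shiftedParts n κ i).det = _
    ring
  rw [schurAverage]
  simp_rw [hpt]
  have h := integral_det_mul_det_eq_factorial_mul_det_s7 (μ := μ)
    (fun i x => x ^ shiftedParts n κ i) (fun i x => x ^ (i : ℕ)) fun a b => by
      simpa [← pow_add] using integrable_pow_of_integrable_abs_pow (hmom _)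
  simp only [← pow_add] at h
  rw [integral_const_mul, h, mul_assoc]
  rfl

end Moments

theorem shiftedParts_subParts {n : ℕ} (α : ℕ → ℕ) (k : Fin (n + 1)) :
    shiftedParts n (subParts α k) = shiftedParts (n + 1) α ∘ k.succAbove := by
  ext a
  simp only [shiftedParts, subParts, Function.comp_apply]
  by_cases h : a.castSucc < k
  · rw [Fin.succAbove_of_castSucc_lt k a h, if_pos (by simpa [Fin.lt_def] using h)]
    simp only [Fin.val_castSucc]
    omega
  · rw [Fin.succAbove_of_le_castSucc k a (not_lt.1 h), if_neg (by simpa [Fin.lt_def] using h)]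
    simp only [Fin.val_succ]
    omega

theorem shiftedParts_addParts {n : ℕ} (β : ℕ → ℕ) (i : ℤ) (m : Fin (n + 1))
    (hβ : ∀ j < (m : ℕ), 1 ≤ β j) (hi : 0 ≤ i + m) :
    shiftedParts (n + 1) (addParts β i m) = Fin.insertNth m (i + n).toNat (shiftedParts n β) := by
  ext a
  obtain rfl | ⟨b, rfl⟩ := Fin.eq_self_or_eq_succAbove m a
  · simp only [shiftedParts, addParts, Fin.insertNth_apply_same, lt_irrefl, if_false, if_true]
    omega
  · simp only [shiftedParts, addParts, Fin.insertNth_apply_succAbove]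
    by_cases h : b.castSucc < m
    · have hb : (b : ℕ) < m := by simpa [Fin.lt_def] using h
      rw [Fin.succAbove_of_castSucc_lt m b h, Fin.val_castSucc, if_pos hb]
      have := hβ b hb
      omega
    · have hb : (m : ℕ) ≤ b := by simpa [Fin.lt_def] using h
      rw [Fin.succAbove_of_le_castSucc m b (not_lt.1 h), Fin.val_succ, if_neg (by omega),
        if_neg (by omega)]
      simp only [Nat.add_sub_cancel]
      omega

/-- `m` is the position at which `i` enters the strictly decreasing sequence
`b_{-j} = β_j - j - 1`; `β + i` is well defined iff such an `m` exists, and then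
`addParts β i m` is `β + i`. -/
def IsInsertPos (β : ℕ → ℕ) (i : ℤ) (m : ℕ) : Prop :=
  (∀ j : ℕ, j < m → (β j : ℤ) - j - 1 > i) ∧ (∀ j : ℕ, m ≤ j → i > (β j : ℤ) - j - 1)

namespace IsInsertPos

variable {β : ℕ → ℕ} {i : ℤ} {m : ℕ}

theorem le {N : ℕ} (h : IsInsertPos β i m) (hβN : β N = 0) (hi : -N ≤ i) : m ≤ N := by
  by_contra hc
  have := h.1 N (by omega)
  omega

theorem nonneg (h : IsInsertPos β i m) : 0 ≤ i + m := by
  have := h.2 m le_rfl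
  omega

theorem one_le (h : IsInsertPos β i m) (hβ : Antitone β) {j : ℕ} (hj : j < m) : 1 ≤ β j := by
  by_contra hc
  have h1 := h.1 (m - 1) (by omega)
  have h2 := h.2 m le_rfl
  have := hβ (show j ≤ m - 1 by omega)
  omega

end IsInsertPos

theorem exists_eq_of_forall_not_isInsertPos {β : ℕ → ℕ} {i : ℤ} {N : ℕ} (hβ : Antitone β)
    (hβN : β N = 0) (hi : -N ≤ i) (h : ∀ m, ¬IsInsertPos β i m) :
    ∃ l < N, (β l : ℤ) - l - 1 = i := by
  classical
  have hlt : ∃ j, (β j : ℤ) - j - 1 < i := ⟨N, by rw [hβN]; omega⟩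
  by_contra hne
  push Not at hne
  have hne' : ∀ l, (β l : ℤ) - l - 1 ≠ i := fun l => by
    by_cases hl : l < N
    · exact hne l hl
    · have := hβ (not_lt.1 hl)
      omega
  refine h (Nat.find hlt) ⟨fun j hj => ?_, fun j hj => ?_⟩
  · have := Nat.find_min hlt hj
    have := hne' j
    omega
  · have := Nat.find_spec hlt
    have := hβ hj
    omega

theorem addTerm_eq_mul_det_cons {N : ℕ} {β : ℕ → ℕ} {i : ℤ} (hβ : Antitone β) (hβN : β N = 0)
    (hi : -N ≤ i) {G : (ℕ → ℕ) → ℝ} {r : ℕ → Fin (N + 1) → ℝ} {c : ℝ}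
    (hG : ∀ κ, G κ = c * (of (r ∘ shiftedParts (N + 1) κ)).det) :
    addTerm β i G = c * (of (Fin.cons (r (i + N).toNat) (r ∘ shiftedParts N β))).det := by
  rw [addTerm]
  split_ifs with h
  · have hm : IsInsertPos β i h.choose := h.choose_spec
    set m := h.choose
    have hmN := hm.le hβN hi
    have hsq : ((-1 : ℝ) ^ m) * (-1) ^ m = 1 := by rw [← mul_pow]; norm_num
    rw [hG, shiftedParts_addParts β i ⟨m, by omega⟩ (fun j hj => hm.one_le hβ hj) hm.nonneg,
      ← Fin.cons_comp_cycleRange, ← Function.comp_assoc, Fin.comp_cons, Fin.cons_comp_cycleRange,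
      det_of_insertNth]
    linear_combination c * (of (Fin.cons (r (i + N).toNat) (r ∘ shiftedParts N β))).det * hsq
  · obtain ⟨l, hl, hbl⟩ := exists_eq_of_forall_not_isInsertPos hβ hβN hi (not_exists.1 h)
    set rows : Fin (N + 1) → Fin (N + 1) → ℝ := Fin.cons (r (i + N).toNat) (r ∘ shiftedParts N β)
    have hrow : rows 0 = rows (Fin.succ ⟨l, hl⟩) := by
      simp only [rows, Fin.cons_zero, Fin.cons_succ, Function.comp_apply, shiftedParts]
      congr 1
      omega
    rw [det_zero_of_row_eq (M := of rows) (Fin.succ_ne_zero ⟨l, hl⟩).symm hrow, mul_zero]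

theorem eq_zero_of_plen_le {κ : ℕ → ℕ} (hκ : Antitone κ) (hκ0 : ∃ N, κ N = 0) {j : ℕ}
    (hj : plen κ ≤ j) : κ j = 0 :=
  Nat.le_zero.1 ((hκ hj).trans (Nat.sInf_mem hκ0).le)

theorem plucker_relations_schur_coefficients_general
    (μ : Measure ℝ)
    (hmom : ∀ m : ℕ, Integrable (fun x : ℝ => |x| ^ m) μ)
    (n : ℕ) (hn : 1 ≤ n)
    (s : (ℕ → ℕ) → (Fin n → ℝ) → ℝ)
    (hs : ∀ (κ : ℕ → ℕ) (lam : Fin n → ℝ),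
      vandermondeProd lam * s κ lam
        = Matrix.det (Matrix.of fun i j : Fin n => lam j ^ (n - 1 - (i : ℕ) + κ i)))
    (α β : ℕ → ℕ)
    (hβ : Antitone β) (hβ0 : ∃ N, ∀ j, N ≤ j → β j = 0)
    (hlβ : plen β ≤ n - 1) :
    ∑ j ∈ Finset.range (n + 1),
        (-1 : ℝ) ^ j * schurAverage μ n s (subParts α j) *
          addTerm β ((α j : ℤ) - j + 1) (schurAverage μ n s)
      = 0 := by
  obtain ⟨N, rfl⟩ : ∃ N, n = N + 1 := ⟨n - 1, by omega⟩
  obtain ⟨c, hc⟩ := exists_schurAverage_eq_mul_det hmom hs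
  have hβN : β N = 0 := eq_zero_of_plen_le hβ (hβ0.imp fun M hM => hM M le_rfl) (by simpa using hlβ)
  set u := momentRow μ (N + 1) ∘ shiftedParts (N + 2) α
  have hsub : ∀ k : Fin (N + 2),
      schurAverage μ (N + 1) s (subParts α k) = c * (of fun j => u (k.succAbove j)).det := by
    intro k
    rw [hc, shiftedParts_subParts]
    rfl
  have hadd : ∀ k : Fin (N + 2), addTerm β ((α k : ℤ) - k + 1) (schurAverage μ (N + 1) s)
      = c * (of (Fin.cons (u k) (momentRow μ (N + 1) ∘ shiftedParts N β))).det := by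
    intro k
    have hx : ((α k : ℤ) - k + 1 + N).toNat = shiftedParts (N + 2) α k := by
      simp only [shiftedParts]
      omega
    rw [addTerm_eq_mul_det_cons hβ hβN (by omega) hc, hx]
    rfl
  rw [← Fin.sum_univ_eq_sum_range]
  simp_rw [hsub, hadd]
  calc _ = c * c * ∑ k : Fin (N + 2), (-1) ^ (k : ℕ) * (of fun j => u (k.succAbove j)).det *
        (of (Fin.cons (u k) (momentRow μ (N + 1) ∘ shiftedParts N β))).det := by
        rw [mul_sum]
        exact sum_congr rfl fun k _ => by ring
    _ = 0 := by rw [sum_neg_one_pow_mul_det_succAbove_mul_det_cons_eq_zero, mul_zero]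

/-- **Plücker relations for the Schur coefficients of the partition function.**
Let `μ` be a positive Borel measure on `ℝ` with all absolute moments finite, `n ≥ 1`,
and `s_κ` the Schur polynomials characterized by the bialternant formula.  Put
`G_κ = ∫_{ℝⁿ} Δ(λ)² s_κ(λ) dμⁿ(λ)`.  Then for all partitions `α`, `β` with
`l(α) ≤ n+1` and `l(β) ≤ n-1`:
`Σ_{j=0}^{n} sgn⁺(α, a_{-j}) · sgn⁻(β, a_{-j}) · G_{α-a_{-j}} · G_{β+a_{-j}} = 0`,
where `a_{-j} = α_j - j + 1`, `sgn⁺(α, a_{-j}) = (-1)^j`, and a summand is `0` whenever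
`β + a_{-j}` is not well defined. -/
theorem plucker_relations_schur_coefficients
    (μ : Measure ℝ)
    (hmom : ∀ m : ℕ, Integrable (fun x : ℝ => |x| ^ m) μ)
    (n : ℕ) (hn : 1 ≤ n)
    (s : (ℕ → ℕ) → (Fin n → ℝ) → ℝ)
    (hs : ∀ (κ : ℕ → ℕ) (lam : Fin n → ℝ),
      vandermondeProd lam * s κ lam
        = Matrix.det (Matrix.of fun i j : Fin n => lam j ^ (n - 1 - (i : ℕ) + κ i)))
    (α β : ℕ → ℕ)
    (hα : Antitone α) (hα0 : ∃ N, ∀ j, N ≤ j → α j = 0)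
    (hβ : Antitone β) (hβ0 : ∃ N, ∀ j, N ≤ j → β j = 0)
    (hlα : plen α ≤ n + 1) (hlβ : plen β ≤ n - 1) :
    ∑ j ∈ Finset.range (n + 1),
        (-1 : ℝ) ^ j * schurAverage μ n s (subParts α j) *
          addTerm β ((α j : ℤ) - j + 1) (schurAverage μ n s)
      = 0 :=
  plucker_relations_schur_coefficients_general μ hmom n hn s hs α β hβ hβ0 hlβ
end
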